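/- Let t > 0 be fixed and let x₁, x₂ > 0 with x₁ ≠ x₂. Then the characteristic triangles Δ(x₁,t) and Δ(x₂,t) do not intersect in the open quadrant (0,∞) × (0,∞); that is, every point of Δ(x₁,t) ∩ Δ(x₂,t) lies on one of the coordinate axes. -/

import Mathlib

/-!
For `x > 0` the characteristic triangle with apex `(x, t)` is the convex hull of the apex and an
arc of the boundary of the quadrant lying strictly below height `t`. Since
`F(y, x', t) = F(y, x, t) - (x' - x) ∫₀^y ρ₀` and `G(τ, x', t) = G(τ, x, t) + (x' - x) ∫₀^τ ρ_b u_b`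
with strictly increasing integrals, as `x` grows the minimizers of `F` move right, those of `G`
move down, `min F` decreases and `min G` increases. Hence for `x₁ < x₂` the arc of `Δ(x₁, t)` ends
before the arc of `Δ(x₂, t)` begins. The first triangle lies on the origin's side of the segment
joining `(x₁, t)` to the end of its arc, the second on the far side of the segment joining
`(x₂, t)` to the start of its arc, and two such segments cannot cross in the open quadrant.
-/

open MeasureTheory Set Filter

noncomputable def Fpot (ρ0 u0 : ℝ → ℝ) (y x t : ℝ) : ℝ :=
  ∫ η in (0:ℝ)..y, (t * u0 η + η - x) * ρ0 η

noncomputable def Gpot (ρb ub : ℝ → ℝ) (τ x t : ℝ) : ℝ :=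
  ∫ η in (0:ℝ)..τ, (x - ub η * (t - η)) * (ρb η * ub η)

/-- `a` minimizes `f` over `[0, ∞)`. -/
def MinimizesOn (f : ℝ → ℝ) (a : ℝ) : Prop :=
  0 ≤ a ∧ ∀ b, 0 ≤ b → f a ≤ f b

/-- `a` is the smallest minimizer of `f` over `[0, ∞)`. -/
def SmallestMinimizer (f : ℝ → ℝ) (a : ℝ) : Prop :=
  MinimizesOn f a ∧ ∀ b, MinimizesOn f b → a ≤ b

/-- `a` is the largest minimizer of `f` over `[0, ∞)`. -/
def LargestMinimizer (f : ℝ → ℝ) (a : ℝ) : Prop :=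
  MinimizesOn f a ∧ ∀ b, MinimizesOn f b → b ≤ a

/-- `v` is the (attained) minimum value of `f` over `[0, ∞)`. -/
def IsMinValue (f : ℝ → ℝ) (v : ℝ) : Prop :=
  (∃ a, 0 ≤ a ∧ f a = v) ∧ ∀ b, 0 ≤ b → v ≤ f b

open Classical in
/-- The characteristic triangle with apex `(x, t)`. -/
noncomputable def charTriangle (Fm Gm ys yS τs τS : ℝ → ℝ → ℝ) (x t : ℝ) : Set (ℝ × ℝ) :=
  if x = 0 ∧ Fm x t < Gm x t then
    convexHull ℝ {((0:ℝ), t), ((0:ℝ), (0:ℝ)), (yS 0 t, (0:ℝ))}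
  else if Fm x t < Gm x t then
    convexHull ℝ {(x, t), (ys x t, (0:ℝ)), (yS x t, (0:ℝ))}
  else if Gm x t < Fm x t then
    convexHull ℝ {(x, t), ((0:ℝ), τs x t), ((0:ℝ), τS x t)}
  else
    convexHull ℝ {(x, t), (yS x t, (0:ℝ)), ((0:ℝ), τS x t), ((0:ℝ), (0:ℝ))}

open Asymptotics

/-- The boundary of the quadrant `[0, ∞)²`, run from the top of the vertical axis down to the
origin and then out along the horizontal axis: `-τ ↦ (0, τ)` and `y ↦ (y, 0)` for `τ, y ≥ 0`. -/
def quadrantBoundary (σ : ℝ) : ℝ × ℝ := (σ⁺, σ⁻)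

lemma quadrantBoundary_of_nonneg {y : ℝ} (hy : 0 ≤ y) : quadrantBoundary y = (y, 0) := by
  simp [quadrantBoundary, hy]

lemma quadrantBoundary_neg {τ : ℝ} (hτ : 0 ≤ τ) : quadrantBoundary (-τ) = (0, τ) := by
  simp [quadrantBoundary, hτ]

def cross (u v : ℝ × ℝ) : ℝ := u.1 * v.2 - u.2 * v.1

lemma isLinearMap_cross (u : ℝ × ℝ) : IsLinearMap ℝ (cross u) :=
  ⟨fun v w => by simp only [cross, Prod.fst_add, Prod.snd_add]; ring,
   fun c v => by simp only [cross, Prod.smul_fst, Prod.smul_snd, smul_eq_mul]; ring⟩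

lemma cross_sub (u v A : ℝ × ℝ) : cross u (v - A) = cross u v - cross u A := by
  simp only [cross, Prod.fst_sub, Prod.snd_sub]; ring

lemma convex_setOf_cross_sub_nonpos (u A : ℝ × ℝ) : Convex ℝ {q | cross u (q - A) ≤ 0} := by
  simpa only [cross_sub, sub_nonpos] using convex_halfSpace_le (isLinearMap_cross u) (cross u A)

lemma convex_setOf_cross_sub_nonneg (u A : ℝ × ℝ) : Convex ℝ {q | 0 ≤ cross u (q - A)} := by
  simpa only [cross_sub, sub_nonneg] using convex_halfSpace_ge (isLinearMap_cross u) (cross u A)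

/-- The segments from `(a, t)` to `quadrantBoundary σ` and from `(b, t)` to
`quadrantBoundary σ'` do not cross in the open quadrant. -/
lemma cross_neg_of_cross_nonpos {a b t σ σ' : ℝ} {q : ℝ × ℝ} (ha : 0 < a) (hab : a < b)
    (hσ : -t < σ) (hσσ' : σ ≤ σ') (hq₁ : 0 < q.1) (hq₂ : 0 < q.2) (hqt : q.2 ≤ t)
    (h : cross (quadrantBoundary σ - (a, t)) (q - (a, t)) ≤ 0) :
    cross (quadrantBoundary σ' - (b, t)) (q - (b, t)) < 0 := by
  obtain ⟨q₁, q₂⟩ := q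
  simp only [cross, Prod.fst_sub, Prod.snd_sub] at h hq₁ hq₂ hqt ⊢
  rcases le_or_gt 0 σ with hσ0 | hσ0
  · rw [quadrantBoundary_of_nonneg hσ0] at h
    rw [quadrantBoundary_of_nonneg (hσ0.trans hσσ')]
    dsimp only at h ⊢
    nlinarith
  rw [← neg_neg σ, quadrantBoundary_neg (by linarith)] at h
  dsimp only at h
  have hq₁a : q₁ ≤ a := by nlinarith
  rcases le_or_gt 0 σ' with hσ'0 | hσ'0
  · rw [quadrantBoundary_of_nonneg hσ'0]
    dsimp only
    nlinarith
  · rw [← neg_neg σ', quadrantBoundary_neg (by linarith)]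
    dsimp only
    nlinarith [mul_le_mul_of_nonneg_left h (by linarith : 0 ≤ b),
      mul_nonneg (sub_nonneg.2 hσσ') (by linarith : 0 ≤ b - q₁),
      mul_pos (mul_pos (by linarith : 0 < t + σ) (sub_pos.2 hab)) hq₁]

def LocallyBoundedOnIci (f : ℝ → ℝ) : Prop := ∀ K, (𝓟 (Icc 0 K)).BoundedAtFilter f

namespace LocallyBoundedOnIci

variable {f g : ℝ → ℝ}

lemma of_abs_le (h : ∀ K, ∃ M, ∀ η ∈ Icc (0 : ℝ) K, |f η| ≤ M) : LocallyBoundedOnIci f :=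
  fun K => by
    obtain ⟨M, hM⟩ := h K
    exact isBigO_principal.2 ⟨M, fun η hη => by simpa using hM η hη⟩

lemma const (c : ℝ) : LocallyBoundedOnIci fun _ => c := fun _ => const_boundedAtFilter _ c

lemma id : LocallyBoundedOnIci fun η => η :=
  of_abs_le fun K => ⟨K, fun η hη => by rw [abs_of_nonneg hη.1]; exact hη.2⟩

lemma add (hf : LocallyBoundedOnIci f) (hg : LocallyBoundedOnIci g) :
    LocallyBoundedOnIci fun η => f η + g η := fun K => (hf K).add (hg K)

lemma sub (hf : LocallyBoundedOnIci f) (hg : LocallyBoundedOnIci g) :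
    LocallyBoundedOnIci fun η => f η - g η := fun K => (hf K).sub (hg K)

lemma mul (hf : LocallyBoundedOnIci f) (hg : LocallyBoundedOnIci g) :
    LocallyBoundedOnIci fun η => f η * g η := fun K => (hf K).mul (hg K)

lemma intervalIntegrable (hf : LocallyBoundedOnIci f) (hmeas : Measurable f) {c d : ℝ}
    (hc : 0 ≤ c) (hd : 0 ≤ d) : IntervalIntegrable f volume c d := by
  obtain ⟨M, hM⟩ := isBigO_principal.1 (hf (max c d))
  have hsub : uIcc c d ⊆ Icc 0 (max c d) := fun η hη => ⟨le_min hc hd |>.trans hη.1, hη.2⟩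
  refine (IntegrableOn.of_bound measure_Icc_lt_top hmeas.aestronglyMeasurable M ?_).mono_set hsub
    |>.intervalIntegrable
  exact (ae_restrict_iff' measurableSet_Icc).2 (Eventually.of_forall fun η hη => by
    simpa using hM η hη)

end LocallyBoundedOnIci

lemma strictMonoOn_integral_of_pos {w : ℝ → ℝ} (hw : ∀ η, 0 ≤ η → 0 < w η)
    (hint : ∀ c d, 0 ≤ c → 0 ≤ d → IntervalIntegrable w volume c d) :
    StrictMonoOn (fun y => ∫ η in (0 : ℝ)..y, w η) (Ici 0) := by
  intro y₁ hy₁ y₂ hy₂ hlt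
  have hpos : 0 < ∫ η in y₁..y₂, w η :=
    intervalIntegral.intervalIntegral_pos_of_pos_on (hint y₁ y₂ hy₁ hy₂)
      (fun η hη => hw η (le_trans hy₁ hη.1.le)) hlt
  simp only [← intervalIntegral.integral_add_adjacent_intervals (hint 0 y₁ le_rfl hy₁)
    (hint y₁ y₂ hy₁ hy₂)]
  linarith

lemma MinimizesOn.le_of_integrand_pos {w : ℝ → ℝ} {τ s : ℝ}
    (hτ : MinimizesOn (fun τ => ∫ η in (0 : ℝ)..τ, w η) τ) (hs : 0 ≤ s)
    (hw : ∀ η, s < η → 0 < w η)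
    (hint : ∀ c d, 0 ≤ c → 0 ≤ d → IntervalIntegrable w volume c d) : τ ≤ s := by
  by_contra! hsτ
  have hpos : 0 < ∫ η in s..τ, w η :=
    intervalIntegral.intervalIntegral_pos_of_pos_on (hint s τ hs hτ.1)
      (fun η hη => hw η hη.1) hsτ
  have hle := hτ.2 s hs
  simp only [← intervalIntegral.integral_add_adjacent_intervals (hint 0 s le_rfl hs)
    (hint s τ hs hτ.1)] at hle
  linarith

section Tilt

variable {f g B : ℝ → ℝ} {c a b v w : ℝ}

lemma MinimizesOn.apply_eq (hv : IsMinValue f v) (ha : MinimizesOn f a) : f a = v := by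
  obtain ⟨⟨z, hz, rfl⟩, hle⟩ := hv
  exact le_antisymm (ha.2 z hz) (hle a ha.1)

lemma MinimizesOn.le_of_eq_sub (hB : StrictMonoOn B (Ici 0)) (hc : 0 < c)
    (hfg : ∀ y, 0 ≤ y → g y = f y - c * B y) (ha : MinimizesOn f a) (hb : MinimizesOn g b) :
    a ≤ b := by
  by_contra! hba
  have h₁ := ha.2 b hb.1
  have h₂ := hb.2 a ha.1
  rw [hfg a ha.1, hfg b hb.1] at h₂
  nlinarith [hB hb.1 ha.1 hba]

lemma IsMinValue.le_sub_of_eq_sub (hfg : ∀ y, 0 ≤ y → g y = f y - c * B y)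
    (hv : IsMinValue f v) (hw : IsMinValue g w) (ha : MinimizesOn f a) : w ≤ v - c * B a := by
  simpa only [hfg a ha.1, ha.apply_eq hv] using hw.2 a ha.1

lemma IsMinValue.le_of_eq_sub (hB : StrictMonoOn B (Ici 0)) (hB0 : B 0 = 0) (hc : 0 ≤ c)
    (hfg : ∀ y, 0 ≤ y → g y = f y - c * B y) (hv : IsMinValue f v) (hw : IsMinValue g w)
    (ha : MinimizesOn f a) : w ≤ v := by
  have hBa : 0 ≤ B a := hB0 ▸ hB.monotoneOn self_mem_Ici ha.1 ha.1
  nlinarith [hv.le_sub_of_eq_sub hfg hw ha, mul_nonneg hc hBa]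

lemma IsMinValue.lt_of_eq_sub (hB : StrictMonoOn B (Ici 0)) (hB0 : B 0 = 0) (hc : 0 < c)
    (hfg : ∀ y, 0 ≤ y → g y = f y - c * B y) (hv : IsMinValue f v) (hw : IsMinValue g w)
    (ha : MinimizesOn f a) (ha0 : 0 < a) : w < v := by
  have hBa : 0 < B a := hB0 ▸ hB self_mem_Ici ha.1 ha0
  nlinarith [hv.le_sub_of_eq_sub hfg hw ha, mul_pos hc hBa]

end Tilt

section Potentials

variable {ρ0 u0 ρb ub : ℝ → ℝ}

lemma Fpot_eq_sub (hρ0 : Measurable ρ0) (hu0 : Measurable u0) (hρ0b : LocallyBoundedOnIci ρ0)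
    (hu0b : LocallyBoundedOnIci u0) {y : ℝ} (hy : 0 ≤ y) (x x' t : ℝ) :
    Fpot ρ0 u0 y x' t = Fpot ρ0 u0 y x t - (x' - x) * ∫ η in (0 : ℝ)..y, ρ0 η := by
  have hint : IntervalIntegrable (fun η => (t * u0 η + η - x) * ρ0 η) volume 0 y :=
    ((((LocallyBoundedOnIci.const t).mul hu0b).add .id).sub (.const x)).mul hρ0b
      |>.intervalIntegrable (by fun_prop) le_rfl hy
  rw [Fpot, Fpot, ← intervalIntegral.integral_const_mul, ← intervalIntegral.integral_sub hint
    ((hρ0b.intervalIntegrable hρ0 le_rfl hy).const_mul _)]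
  congr 1 with η
  ring

lemma locallyBoundedOnIci_Gpot_integrand (hρbb : LocallyBoundedOnIci ρb)
    (hubb : LocallyBoundedOnIci ub) (x t : ℝ) :
    LocallyBoundedOnIci fun η => (x - ub η * (t - η)) * (ρb η * ub η) :=
  ((LocallyBoundedOnIci.const x).sub (hubb.mul ((LocallyBoundedOnIci.const t).sub .id))).mul
    (hρbb.mul hubb)

lemma Gpot_eq_sub (hρb : Measurable ρb) (hub : Measurable ub) (hρbb : LocallyBoundedOnIci ρb)
    (hubb : LocallyBoundedOnIci ub) {τ : ℝ} (hτ : 0 ≤ τ) (x x' t : ℝ) :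
    Gpot ρb ub τ x t = Gpot ρb ub τ x' t - (x' - x) * ∫ η in (0 : ℝ)..τ, ρb η * ub η := by
  rw [Gpot, Gpot, ← intervalIntegral.integral_const_mul, ← intervalIntegral.integral_sub
    ((locallyBoundedOnIci_Gpot_integrand hρbb hubb x' t).intervalIntegrable (by fun_prop) le_rfl hτ)
    (((hρbb.mul hubb).intervalIntegrable (by fun_prop) le_rfl hτ).const_mul _)]
  congr 1 with η
  ring

lemma Fpot_comparison (hρ0 : Measurable ρ0) (hu0 : Measurable u0)
    (hρ0pos : ∀ η, 0 ≤ η → 0 < ρ0 η) (hρ0b : LocallyBoundedOnIci ρ0)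
    (hu0b : LocallyBoundedOnIci u0) {a b t va vb ya yb : ℝ} (hab : a < b)
    (hva : IsMinValue (fun y => Fpot ρ0 u0 y a t) va)
    (hvb : IsMinValue (fun y => Fpot ρ0 u0 y b t) vb)
    (hya : MinimizesOn (fun y => Fpot ρ0 u0 y a t) ya)
    (hyb : MinimizesOn (fun y => Fpot ρ0 u0 y b t) yb) :
    ya ≤ yb ∧ vb ≤ va ∧ (0 < ya → vb < va) := by
  have hB := strictMonoOn_integral_of_pos hρ0pos fun _ _ => hρ0b.intervalIntegrable hρ0
  have hB0 : ∫ η in (0 : ℝ)..0, ρ0 η = 0 := intervalIntegral.integral_same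
  have hF (y : ℝ) (hy : 0 ≤ y) := Fpot_eq_sub hρ0 hu0 hρ0b hu0b hy a b t
  exact ⟨hya.le_of_eq_sub hB (sub_pos.2 hab) hF hyb,
    hva.le_of_eq_sub hB hB0 (sub_pos.2 hab).le hF hvb hya,
    hva.lt_of_eq_sub hB hB0 (sub_pos.2 hab) hF hvb hya⟩

lemma Gpot_comparison (hρb : Measurable ρb) (hub : Measurable ub)
    (hρbpos : ∀ η, 0 ≤ η → 0 < ρb η) (hubpos : ∀ η, 0 ≤ η → 0 < ub η)
    (hρbb : LocallyBoundedOnIci ρb) (hubb : LocallyBoundedOnIci ub) {a b t va vb τa τb : ℝ}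
    (hab : a < b) (hva : IsMinValue (fun τ => Gpot ρb ub τ a t) va)
    (hvb : IsMinValue (fun τ => Gpot ρb ub τ b t) vb)
    (hτa : MinimizesOn (fun τ => Gpot ρb ub τ a t) τa)
    (hτb : MinimizesOn (fun τ => Gpot ρb ub τ b t) τb) :
    τb ≤ τa ∧ va ≤ vb ∧ (0 < τb → va < vb) := by
  have hC := strictMonoOn_integral_of_pos (fun η hη => mul_pos (hρbpos η hη) (hubpos η hη))
    fun _ _ => (hρbb.mul hubb).intervalIntegrable (hρb.mul hub)
  have hC0 : ∫ η in (0 : ℝ)..0, ρb η * ub η = 0 := intervalIntegral.integral_same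
  have hG (τ : ℝ) (hτ : 0 ≤ τ) := Gpot_eq_sub hρb hub hρbb hubb hτ a b t
  exact ⟨hτb.le_of_eq_sub hC (sub_pos.2 hab) hG hτa,
    hvb.le_of_eq_sub hC hC0 (sub_pos.2 hab).le hG hva hτb,
    hvb.lt_of_eq_sub hC hC0 (sub_pos.2 hab) hG hva hτb⟩

/-- Near the apex time the integrand of `Gpot` is positive, because `ub` is bounded. -/
lemma lt_of_minimizesOn_Gpot (hρb : Measurable ρb) (hub : Measurable ub)
    (hρbb : LocallyBoundedOnIci ρb) (hubb : LocallyBoundedOnIci ub)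
    (hρbpos : ∀ η, 0 ≤ η → 0 < ρb η) (hubpos : ∀ η, 0 ≤ η → 0 < ub η) {M : ℝ}
    (hubM : ∀ η, 0 ≤ η → ub η ≤ M) {x t τ : ℝ} (hx : 0 < x) (ht : 0 < t)
    (hτ : MinimizesOn (fun τ => Gpot ρb ub τ x t) τ) : τ < t := by
  set M' := max M 1
  have hM' : 0 < M' := lt_max_of_lt_right one_pos
  have hs : max 0 (t - x / M') < t := max_lt ht (by linarith [div_pos hx hM'])
  refine (hτ.le_of_integrand_pos (le_max_left _ _) (fun η hη => ?_) fun c d hc hd =>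
    (locallyBoundedOnIci_Gpot_integrand hρbb hubb x t).intervalIntegrable (by fun_prop) hc hd)
    |>.trans_lt hs
  have hη0 : 0 ≤ η := (le_max_left _ _).trans hη.le
  have hub_lt : ub η * (t - η) < x := by
    rcases le_or_gt t η with htη | htη
    · nlinarith [hubpos η hη0]
    · have : M' * (t - η) < x := (lt_div_iff₀' hM').1 (by linarith [le_max_right 0 (t - x / M')])
      nlinarith [(hubM η hη0).trans (le_max_left M 1)]
  exact mul_pos (by linarith) (mul_pos (hρbpos η hη0) (hubpos η hη0))

end Potentials

section CharTriangle

variable (Fm Gm ys yS τs τS : ℝ → ℝ → ℝ) (x t : ℝ)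

/-- The base vertex of `charTriangle` that comes last along `quadrantBoundary`. -/
noncomputable def charTriangleRightEnd : ℝ := if Gm x t < Fm x t then -τs x t else yS x t

/-- The base vertex of `charTriangle` that comes first along `quadrantBoundary`. -/
noncomputable def charTriangleLeftEnd : ℝ := if Fm x t < Gm x t then ys x t else -τS x t

structure CharBaseOrdered : Prop where
  ys_nonneg : 0 ≤ ys x t
  ys_le_yS : ys x t ≤ yS x t
  τs_nonneg : 0 ≤ τs x t
  τs_le_τS : τs x t ≤ τS x t
  τS_lt : τS x t < t

variable {Fm Gm ys yS τs τS x t}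

lemma charTriangle_subset (hx : 0 < x) (h : CharBaseOrdered ys yS τs τS x t) :
    charTriangle Fm Gm ys yS τs τS x t ⊆
      {q | cross (quadrantBoundary (charTriangleRightEnd Fm Gm yS τs x t) - (x, t))
        (q - (x, t)) ≤ 0} ∩
      {q | 0 ≤ cross (quadrantBoundary (charTriangleLeftEnd Fm Gm ys τS x t) - (x, t))
        (q - (x, t))} ∩
      Ici 0 ×ˢ Icc 0 t := by
  obtain ⟨hys, hysS, hτs, hτsS, hτSt⟩ := h
  unfold charTriangle charTriangleRightEnd charTriangleLeftEnd
  rw [if_neg fun h => hx.ne' h.1]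
  split_ifs <;>
    refine convexHull_min ?_ (((convex_setOf_cross_sub_nonpos _ _).inter
      (convex_setOf_cross_sub_nonneg _ _)).inter ((convex_Ici 0).prod (convex_Icc 0 t))) <;>
    simp only [insert_subset_iff, singleton_subset_iff, mem_inter_iff, mem_ofPred_eq, mem_prod,
      mem_Ici, mem_Icc, quadrantBoundary_of_nonneg, quadrantBoundary_neg, cross, Prod.fst_sub,
      Prod.snd_sub, hys, hτs, hys.trans hysS, hτs.trans hτsS] <;>
    and_intros <;> first | trivial | nlinarith

lemma neg_lt_charTriangleRightEnd (ht : 0 < t) (h : CharBaseOrdered ys yS τs τS x t) :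
    -t < charTriangleRightEnd Fm Gm yS τs x t := by
  have := h.τs_le_τS.trans_lt h.τS_lt
  have := h.ys_nonneg.trans h.ys_le_yS
  unfold charTriangleRightEnd
  split_ifs <;> linarith

/-- If `Fm = Gm` at both apices, the hypotheses force `yS a t = 0 = τS b t`. -/
lemma charTriangleRightEnd_le_leftEnd {a b : ℝ}
    (hFm : Fm b t ≤ Fm a t) (hFm_lt : 0 < yS a t → Fm b t < Fm a t)
    (hGm : Gm a t ≤ Gm b t) (hGm_lt : 0 < τS b t → Gm a t < Gm b t)
    (hy : yS a t ≤ ys b t) (hτ : τS b t ≤ τs a t) (hyS : 0 ≤ yS a t) (hτS : 0 ≤ τS b t) :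
    charTriangleRightEnd Fm Gm yS τs a t ≤ charTriangleLeftEnd Fm Gm ys τS b t := by
  unfold charTriangleRightEnd charTriangleLeftEnd
  split_ifs with hA hB hB
  · linarith
  · linarith
  · exact hy
  · have hyS0 : ¬ 0 < yS a t := fun h => by linarith [hFm_lt h]
    have hτS0 : ¬ 0 < τS b t := fun h => by linarith [hGm_lt h]
    linarith

lemma charTriangle_inter_subset_axes {a b : ℝ} (ha : 0 < a) (hab : a < b) (ht : 0 < t)
    (hA : CharBaseOrdered ys yS τs τS a t) (hB : CharBaseOrdered ys yS τs τS b t)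
    (hend : charTriangleRightEnd Fm Gm yS τs a t ≤ charTriangleLeftEnd Fm Gm ys τS b t) :
    ∀ p ∈ charTriangle Fm Gm ys yS τs τS a t ∩ charTriangle Fm Gm ys yS τs τS b t,
      p.1 = 0 ∨ p.2 = 0 := by
  rintro p ⟨hpa, hpb⟩
  obtain ⟨⟨hpa_right, -⟩, hp₁, hp₂, hpt⟩ := charTriangle_subset ha hA hpa
  obtain ⟨⟨-, hpb_left⟩, -⟩ := charTriangle_subset (ha.trans hab) hB hpb
  by_contra! hp
  exact (cross_neg_of_cross_nonpos ha hab (neg_lt_charTriangleRightEnd ht hA) hend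
    (lt_of_le_of_ne' hp₁ hp.1) (lt_of_le_of_ne' hp₂ hp.2) hpt hpa_right).not_ge hpb_left

end CharTriangle

theorem stmt10
    (ρ0 u0 ρb ub : ℝ → ℝ)
    (hρ0meas : Measurable ρ0) (hu0meas : Measurable u0)
    (hρbmeas : Measurable ρb) (hubmeas : Measurable ub)
    (hρ0pos : ∀ η, 0 ≤ η → 0 < ρ0 η)
    (hρbpos : ∀ η, 0 ≤ η → 0 < ρb η)
    (hubpos : ∀ η, 0 ≤ η → 0 < ub η)
    (hρ0loc : ∀ K : ℝ, ∃ M : ℝ, ∀ η ∈ Set.Icc (0:ℝ) K, ρ0 η ≤ M)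
    (hρbloc : ∀ K : ℝ, ∃ M : ℝ, ∀ η ∈ Set.Icc (0:ℝ) K, ρb η ≤ M)
    (hu0bdd : ∃ M : ℝ, ∀ η, 0 ≤ η → |u0 η| ≤ M)
    (hubbdd : ∃ M : ℝ, ∀ η, 0 ≤ η → |ub η| ≤ M)
    (Fm Gm : ℝ → ℝ → ℝ)
    (hFm : ∀ x t, 0 ≤ x → 0 ≤ t → IsMinValue (fun y => Fpot ρ0 u0 y x t) (Fm x t))
    (hGm : ∀ x t, 0 ≤ x → 0 ≤ t → IsMinValue (fun τ => Gpot ρb ub τ x t) (Gm x t))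
    (ys yS τs τS : ℝ → ℝ → ℝ)
    (hys : ∀ x t, 0 ≤ x → 0 ≤ t → SmallestMinimizer (fun y => Fpot ρ0 u0 y x t) (ys x t))
    (hyS : ∀ x t, 0 ≤ x → 0 ≤ t → LargestMinimizer (fun y => Fpot ρ0 u0 y x t) (yS x t))
    (hτs : ∀ x t, 0 ≤ x → 0 ≤ t → SmallestMinimizer (fun τ => Gpot ρb ub τ x t) (τs x t))
    (hτS : ∀ x t, 0 ≤ x → 0 ≤ t → LargestMinimizer (fun τ => Gpot ρb ub τ x t) (τS x t))
    (t x₁ x₂ : ℝ) (ht : 0 < t) (hx₁ : 0 < x₁) (hx₂ : 0 < x₂) (hne : x₁ ≠ x₂) :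
    ∀ p ∈ charTriangle Fm Gm ys yS τs τS x₁ t ∩ charTriangle Fm Gm ys yS τs τS x₂ t,
      p.1 = 0 ∨ p.2 = 0 := by
  obtain ⟨Mu, hMu⟩ := hu0bdd
  obtain ⟨Mb, hMb⟩ := hubbdd
  have hρ0b : LocallyBoundedOnIci ρ0 := .of_abs_le fun K => (hρ0loc K).imp fun _ hM η hη => by
    rw [abs_of_pos (hρ0pos η hη.1)]; exact hM η hη
  have hρbb : LocallyBoundedOnIci ρb := .of_abs_le fun K => (hρbloc K).imp fun _ hM η hη => by
    rw [abs_of_pos (hρbpos η hη.1)]; exact hM η hη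
  have hu0b : LocallyBoundedOnIci u0 := .of_abs_le fun _ => ⟨Mu, fun η hη => hMu η hη.1⟩
  have hubb : LocallyBoundedOnIci ub := .of_abs_le fun _ => ⟨Mb, fun η hη => hMb η hη.1⟩
  have hbase (x : ℝ) (hx : 0 < x) : CharBaseOrdered ys yS τs τS x t :=
    ⟨(hys x t hx.le ht.le).1.1, (hyS x t hx.le ht.le).2 _ (hys x t hx.le ht.le).1,
      (hτs x t hx.le ht.le).1.1, (hτS x t hx.le ht.le).2 _ (hτs x t hx.le ht.le).1,
      lt_of_minimizesOn_Gpot hρbmeas hubmeas hρbb hubb hρbpos hubpos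
        (fun η hη => (le_abs_self _).trans (hMb η hη)) hx ht (hτS x t hx.le ht.le).1⟩
  have key (a b : ℝ) (ha : 0 < a) (hab : a < b) : ∀ p ∈ charTriangle Fm Gm ys yS τs τS a t ∩
      charTriangle Fm Gm ys yS τs τS b t, p.1 = 0 ∨ p.2 = 0 := by
    have hb := ha.trans hab
    obtain ⟨hy, hFm_le, hFm_lt⟩ := Fpot_comparison hρ0meas hu0meas hρ0pos hρ0b hu0b hab
      (hFm a t ha.le ht.le) (hFm b t hb.le ht.le) (hyS a t ha.le ht.le).1 (hys b t hb.le ht.le).1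
    obtain ⟨hτ, hGm_le, hGm_lt⟩ := Gpot_comparison hρbmeas hubmeas hρbpos hubpos hρbb hubb hab
      (hGm a t ha.le ht.le) (hGm b t hb.le ht.le) (hτs a t ha.le ht.le).1 (hτS b t hb.le ht.le).1
    exact charTriangle_inter_subset_axes ha hab ht (hbase a ha) (hbase b hb)
      (charTriangleRightEnd_le_leftEnd hFm_le hFm_lt hGm_le hGm_lt hy hτ
        (hyS a t ha.le ht.le).1.1 (hτS b t hb.le ht.le).1.1)
  rcases hne.lt_or_gt with h | h
  · exact key x₁ x₂ hx₁ h
  · exact fun p hp => key x₂ x₁ hx₂ h p hp.symm
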